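/- arXiv:2410.14092 — 5 statements merged into one kernel-verified Lean document; each statement's English description precedes it below -/
import Mathlib

section
/- Let A ∈ ℝ^{d×d} be symmetric, let 1 ≤ k ≤ d, let ε > 0, and let A^ε be the thresholded matrix. If x* maximizes xᵀAx over the set {x ∈ ℝ^d : ‖x‖₂ = 1, ‖x‖₀ ≤ k} and x̃ maximizes xᵀA^εx over the same set, then |(x*)ᵀ A x* − x̃ᵀ A x̃| ≤ 2kε. -/
open Matrix BigOperators

/-- Number of nonzero coordinates of a vector (the "ℓ₀ norm"). -/
noncomputable def sparsity {d : ℕ} (x : Fin d → ℝ) : ℕ := {i : Fin d | x i ≠ 0}.ncard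

/-- The quadratic form xᵀ M x. -/
noncomputable def quadForm {d : ℕ} (M : Matrix (Fin d) (Fin d) ℝ) (x : Fin d → ℝ) : ℝ :=
  x ⬝ᵥ M.mulVec x

/-- The thresholded matrix: A^ε_{ij} = A_{ij} if |A_{ij}| > ε, else 0. -/
noncomputable def thresh {d : ℕ} (A : Matrix (Fin d) (Fin d) ℝ) (ε : ℝ) :
    Matrix (Fin d) (Fin d) ℝ :=
  Matrix.of fun i j => if ε < |A i j| then A i j else 0

/-! The thresholded matrix differs from `A` by at most `ε` in every entry, so for a unit vector
`x` with at most `k` nonzero entries the two quadratic forms differ by at most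
`ε (∑ |xᵢ|)² ≤ ε k ∑ xᵢ² = k ε` (Cauchy–Schwarz on the support of `x`). Both maximizers lie in
the same feasible set, and two functions that are uniformly `δ`-close on a set have maxima whose
values under either function differ by at most `2δ`. -/

lemma abs_sub_le_of_isMaxOn {α : Type*} {f g : α → ℝ} {s : Set α} {a b : α} {δ : ℝ}
    (hfg : ∀ x ∈ s, |f x - g x| ≤ δ) (ha : a ∈ s) (hb : b ∈ s)
    (hfa : IsMaxOn f s a) (hgb : IsMaxOn g s b) :
    |f a - f b| ≤ 2 * δ := by
  have hfb : f b ≤ f a := hfa hb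
  have hga : g a ≤ g b := hgb ha
  have h₁ := (abs_le.mp (hfg a ha)).2
  have h₂ := (abs_le.mp (hfg b hb)).1
  rw [abs_le]
  constructor <;> linarith

lemma abs_sub_thresh_le {d : ℕ} (A : Matrix (Fin d) (Fin d) ℝ) {ε : ℝ} (hε : 0 ≤ ε)
    (i j : Fin d) : |A i j - thresh A ε i j| ≤ ε := by
  by_cases h : ε < |A i j|
  · simpa [thresh, h] using hε
  · simpa [thresh, h] using not_lt.mp h

lemma sparsity_eq_card_filter {d : ℕ} (x : Fin d → ℝ) :
    sparsity x = (Finset.univ.filter fun i => x i ≠ 0).card := by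
  rw [sparsity, ← Set.ncard_coe_finset]
  simp

lemma sq_sum_abs_le_sparsity_mul_sum_sq {d : ℕ} (x : Fin d → ℝ) :
    (∑ i, |x i|) ^ 2 ≤ sparsity x * ∑ i, x i ^ 2 := by
  classical
  calc (∑ i, |x i|) ^ 2 = (∑ i with x i ≠ 0, |x i|) ^ 2 := by
        simp_rw [← abs_ne_zero (a := x _), Finset.sum_filter_ne_zero]
    _ ≤ sparsity x * ∑ i with x i ≠ 0, |x i| ^ 2 := by
        rw [sparsity_eq_card_filter]
        exact sq_sum_le_card_mul_sum_sq
    _ = sparsity x * ∑ i, x i ^ 2 := by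
        simp_rw [sq_abs, ← pow_ne_zero_iff two_ne_zero (a := x _), Finset.sum_filter_ne_zero]

lemma quadForm_sub {d : ℕ} (A B : Matrix (Fin d) (Fin d) ℝ) (x : Fin d → ℝ) :
    quadForm A x - quadForm B x = quadForm (A - B) x := by
  simp only [quadForm, sub_mulVec, dotProduct_sub]

lemma abs_quadForm_le {d : ℕ} (M : Matrix (Fin d) (Fin d) ℝ) {ε : ℝ}
    (hM : ∀ i j, |M i j| ≤ ε) (x : Fin d → ℝ) :
    |quadForm M x| ≤ ε * (∑ i, |x i|) ^ 2 := by
  calc |quadForm M x| = |∑ i, ∑ j, x i * M i j * x j| := by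
        simp only [quadForm, dotProduct, mulVec, Finset.mul_sum, mul_assoc]
    _ ≤ ∑ i, ∑ j, |x i| * ε * |x j| := by
        refine (Finset.abs_sum_le_sum_abs _ _).trans (Finset.sum_le_sum fun i _ => ?_)
        refine (Finset.abs_sum_le_sum_abs _ _).trans (Finset.sum_le_sum fun j _ => ?_)
        rw [abs_mul, abs_mul]
        gcongr
        exact hM i j
    _ = ε * (∑ i, |x i|) ^ 2 := by
        rw [sq, Finset.sum_mul_sum, Finset.mul_sum]
        simp only [Finset.mul_sum]
        exact Finset.sum_congr rfl fun i _ => Finset.sum_congr rfl fun j _ => by ring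

lemma abs_quadForm_sub_le_of_sparsity_le {d k : ℕ} {A B : Matrix (Fin d) (Fin d) ℝ} {ε : ℝ}
    (hε : 0 ≤ ε) (hAB : ∀ i j, |A i j - B i j| ≤ ε) {x : Fin d → ℝ}
    (hx2 : ∑ i, x i ^ 2 = 1) (hx0 : sparsity x ≤ k) :
    |quadForm A x - quadForm B x| ≤ k * ε := by
  rw [quadForm_sub]
  calc |quadForm (A - B) x| ≤ ε * (∑ i, |x i|) ^ 2 := abs_quadForm_le _ hAB x
    _ ≤ ε * (sparsity x * ∑ i, x i ^ 2) := by
        gcongr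
        exact sq_sum_abs_le_sparsity_mul_sum_sq x
    _ ≤ k * ε := by
        rw [hx2, mul_one, mul_comm]
        gcongr

theorem stmt_2_general {d k : ℕ}
    (A : Matrix (Fin d) (Fin d) ℝ) (ε : ℝ) (hε : 0 < ε)
    (xstar xtil : Fin d → ℝ)
    (hxs2 : ∑ i, xstar i ^ 2 = 1) (hxs0 : sparsity xstar ≤ k)
    (hxsmax : ∀ x : Fin d → ℝ, ∑ i, x i ^ 2 = 1 → sparsity x ≤ k →
      quadForm A x ≤ quadForm A xstar)
    (hxt2 : ∑ i, xtil i ^ 2 = 1) (hxt0 : sparsity xtil ≤ k)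
    (hxtmax : ∀ x : Fin d → ℝ, ∑ i, x i ^ 2 = 1 → sparsity x ≤ k →
      quadForm (thresh A ε) x ≤ quadForm (thresh A ε) xtil) :
    |quadForm A xstar - quadForm A xtil| ≤ 2 * (k : ℝ) * ε := by
  let feasible : Set (Fin d → ℝ) := {x | ∑ i, x i ^ 2 = 1 ∧ sparsity x ≤ k}
  have hclose : ∀ x ∈ feasible, |quadForm A x - quadForm (thresh A ε) x| ≤ k * ε :=
    fun x ⟨hx2, hx0⟩ =>
      abs_quadForm_sub_le_of_sparsity_le hε.le (abs_sub_thresh_le A hε.le) hx2 hx0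
  rw [mul_assoc]
  exact abs_sub_le_of_isMaxOn hclose ⟨hxs2, hxs0⟩ ⟨hxt2, hxt0⟩
    (fun x ⟨hx2, hx0⟩ => hxsmax x hx2 hx0) (fun x ⟨hx2, hx0⟩ => hxtmax x hx2 hx0)

/-- If x* maximizes xᵀAx and x̃ maximizes xᵀA^εx over the unit-norm k-sparse vectors,
then |(x*)ᵀ A x* − x̃ᵀ A x̃| ≤ 2kε. -/
theorem stmt_2 {d k : ℕ} (hd : 1 ≤ d) (hk1 : 1 ≤ k) (hkd : k ≤ d)
    (A : Matrix (Fin d) (Fin d) ℝ) (hA : A.IsSymm) (ε : ℝ) (hε : 0 < ε)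
    (xstar xtil : Fin d → ℝ)
    (hxs2 : ∑ i, xstar i ^ 2 = 1) (hxs0 : sparsity xstar ≤ k)
    (hxsmax : ∀ x : Fin d → ℝ, ∑ i, x i ^ 2 = 1 → sparsity x ≤ k →
      quadForm A x ≤ quadForm A xstar)
    (hxt2 : ∑ i, xtil i ^ 2 = 1) (hxt0 : sparsity xtil ≤ k)
    (hxtmax : ∀ x : Fin d → ℝ, ∑ i, x i ^ 2 = 1 → sparsity x ≤ k →
      quadForm (thresh A ε) x ≤ quadForm (thresh A ε) xtil) :
    |quadForm A xstar - quadForm A xtil| ≤ 2 * (k : ℝ) * ε :=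
  stmt_2_general A ε hε xstar xtil hxs2 hxs0 hxsmax hxt2 hxt0 hxtmax
end

section
/- Let A ∈ ℝ^{d×d} be symmetric with block structure S_1,…,S_p, and let 1 ≤ k ≤ d. For each i ∈ [p] define OPT_i := sup { xᵀAx : x ∈ ℝ^d, ‖x‖₂ = 1, ‖x‖₀ ≤ k, supp(x) ⊆ S_i }. Then OPT(A,k) = max_{i∈[p]} OPT_i. -/
open Matrix BigOperators

/-- The Sparse PCA value OPT(A,k) = sup { xᵀAx : ‖x‖₂ = 1, ‖x‖₀ ≤ k }. -/
noncomputable def OPT {d : ℕ} (A : Matrix (Fin d) (Fin d) ℝ) (k : ℕ) : ℝ :=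
  sSup {v | ∃ x : Fin d → ℝ, ∑ i, x i ^ 2 = 1 ∧ sparsity x ≤ k ∧ v = quadForm A x}

/-!
Because `A` has no entries between different blocks, the quadratic form splits as
`xᵀAx = ∑ᵢ xᵢᵀAxᵢ` where `xᵢ` is the restriction of `x` to `Sᵢ`, and likewise
`‖x‖² = ∑ᵢ ‖xᵢ‖²`. Each restriction is still `k`-sparse, so rescaling it to a unit vector gives
`xᵢᵀAxᵢ ≤ ‖xᵢ‖² OPTᵢ`; hence `xᵀAx` is at most a convex combination of the `OPTᵢ`.
The reverse inequality holds because every vector supported in one block is feasible for `OPT`.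
-/

open Function

/-- `OPT A k` is the supremum of `sparsePCAValues A k univ`, and `OPTᵢ` that of
`sparsePCAValues A k (S i)`. -/
noncomputable def sparsePCAValues {d : ℕ} (A : Matrix (Fin d) (Fin d) ℝ) (k : ℕ)
    (s : Set (Fin d)) : Set ℝ :=
  {v | ∃ x : Fin d → ℝ, ∑ i', x i' ^ 2 = 1 ∧ sparsity x ≤ k ∧ {j | x j ≠ 0} ⊆ s ∧
    v = quadForm A x}

lemma sum_indicator_eq_self_of_partition {ι α M : Type*} [Fintype ι] [AddCommMonoid M]
    {S : ι → Set α} (hdisj : Pairwise (Disjoint on S)) (hcover : ⋃ i, S i = Set.univ)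
    (f : α → M) : ∑ i, (S i).indicator f = f := by
  have h := Finset.indicator_biUnion Finset.univ S (f := f) fun i _ j _ hij => hdisj hij
  simp only [Finset.mem_univ, Set.iUnion_true, hcover, Set.indicator_univ] at h
  ext a
  rw [Finset.sum_apply]
  exact (congrFun h a).symm

section QuadForm

variable {d : ℕ} (A : Matrix (Fin d) (Fin d) ℝ)

lemma quadForm_smul (c : ℝ) (x : Fin d → ℝ) : quadForm A (c • x) = c ^ 2 * quadForm A x := by
  simp only [quadForm, mulVec_smul, smul_dotProduct, dotProduct_smul, smul_eq_mul]
  ring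

lemma sum_sq_eq_quadForm_one (x : Fin d → ℝ) : ∑ j, x j ^ 2 = quadForm 1 x := by
  simp [quadForm, dotProduct, sq]

lemma quadForm_sum {ι : Type*} [Fintype ι] (y : ι → Fin d → ℝ)
    (h : Pairwise fun i j => y i ⬝ᵥ A *ᵥ y j = 0) :
    quadForm A (∑ i, y i) = ∑ i, quadForm A (y i) := by
  simp only [quadForm, mulVec_sum, dotProduct_sum, sum_dotProduct]
  exact Finset.sum_congr rfl fun i _ =>
    Finset.sum_eq_single i (fun j _ hji => h hji) (by simp)

lemma indicator_dotProduct_mulVec_indicator {s t : Set (Fin d)}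
    (h : ∀ a ∈ s, ∀ b ∈ t, A a b = 0) (x y : Fin d → ℝ) :
    s.indicator x ⬝ᵥ A *ᵥ t.indicator y = 0 := by
  simp only [dotProduct, mulVec, Finset.mul_sum]
  refine Finset.sum_eq_zero fun a _ => Finset.sum_eq_zero fun b _ => ?_
  by_cases ha : a ∈ s
  · by_cases hb : b ∈ t
    · simp [h a ha b hb]
    · simp [hb]
  · simp [ha]

lemma quadForm_eq_sum_quadForm_indicator {ι : Type*} [Fintype ι] {S : ι → Set (Fin d)}
    (hdisj : Pairwise (Disjoint on S)) (hcover : ⋃ i, S i = Set.univ)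
    (hblock : ∀ i j : ι, i ≠ j → ∀ a ∈ S i, ∀ b ∈ S j, A a b = 0) (x : Fin d → ℝ) :
    quadForm A x = ∑ i, quadForm A ((S i).indicator x) := by
  conv_lhs => rw [← sum_indicator_eq_self_of_partition hdisj hcover x]
  exact quadForm_sum A _ fun i j hij => indicator_dotProduct_mulVec_indicator A (hblock i j hij) x x

/-- The squared norm is the quadratic form of `1`, which is block diagonal for every partition. -/
lemma sum_sq_eq_sum_sum_sq_indicator {ι : Type*} [Fintype ι] {S : ι → Set (Fin d)}
    (hdisj : Pairwise (Disjoint on S)) (hcover : ⋃ i, S i = Set.univ) (x : Fin d → ℝ) :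
    ∑ j, x j ^ 2 = ∑ i, ∑ j, (S i).indicator x j ^ 2 := by
  simp only [sum_sq_eq_quadForm_one]
  refine quadForm_eq_sum_quadForm_indicator 1 hdisj hcover (fun i j hij a ha b hb => ?_) x
  exact one_apply_ne fun hab => Set.disjoint_left.mp (hdisj hij) ha (hab ▸ hb)

lemma abs_le_one_of_sum_sq_eq_one {x : Fin d → ℝ} (hx : ∑ j, x j ^ 2 = 1) (j : Fin d) :
    |x j| ≤ 1 := by
  rw [← sq_le_one_iff_abs_le_one, ← hx]
  exact Finset.single_le_sum (f := fun i => x i ^ 2) (fun i _ => sq_nonneg _) (Finset.mem_univ j)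

variable (k : ℕ)

lemma sparsePCAValues_mono {s t : Set (Fin d)} (hst : s ⊆ t) :
    sparsePCAValues A k s ⊆ sparsePCAValues A k t := by
  rintro v ⟨x, hx, hxk, hxs, rfl⟩
  exact ⟨x, hx, hxk, hxs.trans hst, rfl⟩

lemma sparsePCAValues_bddAbove (s : Set (Fin d)) : BddAbove (sparsePCAValues A k s) := by
  refine ⟨∑ a, ∑ b, |A a b|, ?_⟩
  rintro v ⟨x, hx, -, -, rfl⟩
  have hx1 := abs_le_one_of_sum_sq_eq_one hx
  simp only [quadForm, dotProduct, mulVec, Finset.mul_sum]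
  refine Finset.sum_le_sum fun a _ => Finset.sum_le_sum fun b _ => ?_
  calc x a * (A a b * x b) ≤ |x a| * (|A a b| * |x b|) := by
        simpa only [abs_mul] using le_abs_self (x a * (A a b * x b))
    _ ≤ 1 * (|A a b| * 1) := by gcongr <;> simp [hx1]
    _ = |A a b| := by ring

lemma sparsePCAValues_nonempty {s : Set (Fin d)} (hs : s.Nonempty) (hk : 1 ≤ k) :
    (sparsePCAValues A k s).Nonempty := by
  obtain ⟨a, ha⟩ := hs
  have hsupp : support (Pi.single a 1 : Fin d → ℝ) = {a} :=
    Pi.support_single_of_ne one_ne_zero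
  refine ⟨_, Pi.single a 1, by simp [Pi.single_apply], ?_, ?_, rfl⟩
  · rw [sparsity, ← support, hsupp, Set.ncard_singleton]
    exact hk
  · rw [← support, hsupp]
    exact Set.singleton_subset_iff.mpr ha

lemma quadForm_le_sum_sq_mul_sSup {s : Set (Fin d)} {y : Fin d → ℝ}
    (hys : support y ⊆ s) (hyk : sparsity y ≤ k) :
    quadForm A y ≤ (∑ j, y j ^ 2) * sSup (sparsePCAValues A k s) := by
  set w := ∑ j, y j ^ 2
  rcases (Finset.sum_nonneg fun j _ => sq_nonneg (y j) : 0 ≤ w).eq_or_lt with hw | hw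
  · have hy : y = 0 := funext fun j => pow_eq_zero_iff two_ne_zero |>.mp <|
      (Finset.sum_eq_zero_iff_of_nonneg fun j _ => sq_nonneg (y j)).mp hw.symm j (Finset.mem_univ j)
    rw [show w = 0 from hw.symm, hy]
    simp [quadForm]
  · set c := Real.sqrt w
    have hc : c ^ 2 = w := Real.sq_sqrt hw.le
    have hc0 : c ≠ 0 := (Real.sqrt_pos.mpr hw).ne'
    have hz : quadForm A (c⁻¹ • y) ∈ sparsePCAValues A k s := by
      refine ⟨c⁻¹ • y, ?_, ?_, ?_, rfl⟩
      · simp only [Pi.smul_apply, smul_eq_mul, mul_pow, ← Finset.mul_sum, inv_pow, hc]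
        exact inv_mul_cancel₀ hw.ne'
      · rwa [sparsity, ← support, support_const_smul_of_ne_zero _ _ (inv_ne_zero hc0)]
      · rwa [← support, support_const_smul_of_ne_zero _ _ (inv_ne_zero hc0)]
    calc quadForm A y = w * quadForm A (c⁻¹ • y) := by
          rw [quadForm_smul, inv_pow, hc, mul_inv_cancel_left₀ hw.ne']
      _ ≤ w * sSup (sparsePCAValues A k s) :=
          mul_le_mul_of_nonneg_left (le_csSup (sparsePCAValues_bddAbove A k s) hz) hw.le

lemma le_iSup_sSup_sparsePCAValues_of_block {ι : Type*} [Fintype ι] {S : ι → Set (Fin d)}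
    (hdisj : Pairwise (Disjoint on S)) (hcover : ⋃ i, S i = Set.univ)
    (hblock : ∀ i j : ι, i ≠ j → ∀ a ∈ S i, ∀ b ∈ S j, A a b = 0)
    {v : ℝ} (hv : v ∈ sparsePCAValues A k Set.univ) :
    v ≤ ⨆ i, sSup (sparsePCAValues A k (S i)) := by
  obtain ⟨x, hx, hxk, -, rfl⟩ := hv
  set M := ⨆ i, sSup (sparsePCAValues A k (S i))
  have hM : ∀ i, sSup (sparsePCAValues A k (S i)) ≤ M := le_ciSup (Set.finite_range _).bddAbove
  calc quadForm A x = ∑ i, quadForm A ((S i).indicator x) :=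
        quadForm_eq_sum_quadForm_indicator A hdisj hcover hblock x
    _ ≤ ∑ i, (∑ j, (S i).indicator x j ^ 2) * M := Finset.sum_le_sum fun i _ => by
        refine (quadForm_le_sum_sq_mul_sSup A k Set.support_indicator_subset ?_).trans ?_
        · refine le_trans (Set.ncard_le_ncard ?_ (Set.toFinite _)) hxk
          exact Set.support_indicator.trans_subset Set.inter_subset_right
        · exact mul_le_mul_of_nonneg_left (hM i) (Finset.sum_nonneg fun j _ => sq_nonneg _)
    _ = M := by rw [← Finset.sum_mul, ← sum_sq_eq_sum_sum_sq_indicator hdisj hcover, hx, one_mul]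

lemma OPT_eq_sSup_sparsePCAValues_univ : OPT A k = sSup (sparsePCAValues A k Set.univ) := by
  simp [OPT, sparsePCAValues]

end QuadForm

theorem stmt_3_general {d p k : ℕ} (hp : 1 ≤ p) (hk1 : 1 ≤ k)
    (A : Matrix (Fin d) (Fin d) ℝ)
    (S : Fin p → Set (Fin d))
    (hne : ∀ i, (S i).Nonempty)
    (hdisj : ∀ i j, i ≠ j → Disjoint (S i) (S j))
    (hcover : (⋃ i, S i) = Set.univ)
    (hblock : ∀ i j : Fin p, i ≠ j → ∀ a ∈ S i, ∀ b ∈ S j, A a b = 0) :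
    OPT A k = ⨆ i : Fin p, sSup {v | ∃ x : Fin d → ℝ, ∑ i', x i' ^ 2 = 1 ∧
      sparsity x ≤ k ∧ {j | x j ≠ 0} ⊆ S i ∧ v = quadForm A x} := by
  have : Nonempty (Fin p) := ⟨⟨0, hp⟩⟩
  have hsub : ∀ i, sparsePCAValues A k (S i) ⊆ sparsePCAValues A k Set.univ := fun i =>
    sparsePCAValues_mono A k (Set.subset_univ _)
  change OPT A k = ⨆ i, sSup (sparsePCAValues A k (S i))
  rw [OPT_eq_sSup_sparsePCAValues_univ]
  refine le_antisymm ?_ ?_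
  · exact csSup_le ((sparsePCAValues_nonempty A k (hne ⟨0, hp⟩) hk1).mono (hsub _))
      fun v hv => le_iSup_sSup_sparsePCAValues_of_block A k hdisj hcover hblock hv
  · exact ciSup_le fun i => csSup_le_csSup (sparsePCAValues_bddAbove A k _)
      (sparsePCAValues_nonempty A k (hne i) hk1) (hsub i)

/-- For a block-structured symmetric matrix, OPT(A,k) equals the maximum over blocks of the
Sparse PCA value restricted to vectors supported in that block. -/
theorem stmt_3 {d p k : ℕ} (hd : 1 ≤ d) (hp : 1 ≤ p) (hk1 : 1 ≤ k) (hkd : k ≤ d)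
    (A : Matrix (Fin d) (Fin d) ℝ) (hA : A.IsSymm)
    (S : Fin p → Set (Fin d))
    (hne : ∀ i, (S i).Nonempty)
    (hdisj : ∀ i j, i ≠ j → Disjoint (S i) (S j))
    (hcover : (⋃ i, S i) = Set.univ)
    (hblock : ∀ i j : Fin p, i ≠ j → ∀ a ∈ S i, ∀ b ∈ S j, A a b = 0) :
    OPT A k = ⨆ i : Fin p, sSup {v | ∃ x : Fin d → ℝ, ∑ i', x i' ^ 2 = 1 ∧
      sparsity x ≤ k ∧ {j | x j ≠ 0} ⊆ S i ∧ v = quadForm A x} :=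
  stmt_3_general hp hk1 A S hne hdisj hcover hblock
end

section
/- Let A ∈ ℝ^{d×d} be symmetric and ε > 0, and let A^ε be the thresholded matrix. Then ‖A − A^ε‖∞ ≤ ε, and for every matrix B ∈ ℝ^{d×d} with ‖A − B‖∞ ≤ ε one has lbs(A^ε) ≤ lbs(B). Consequently, lbs(A^ε) = min { lbs(B) : B ∈ ℝ^{d×d}, ‖A − B‖∞ ≤ ε }, i.e., the thresholded matrix attains the ε-intrinsic dimension of A. -/
open Matrix BigOperators

/-- Entrywise maximum absolute value: ‖M‖∞ = max_{i,j} |M i j|. -/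
noncomputable def infNorm {d : ℕ} (M : Matrix (Fin d) (Fin d) ℝ) : ℝ :=
  ⨆ p : Fin d × Fin d, |M p.1 p.2|

/-- The support graph of a matrix B: distinct i, j adjacent iff B i j ≠ 0 or B j i ≠ 0. -/
def suppGraph {d : ℕ} (B : Matrix (Fin d) (Fin d) ℝ) : SimpleGraph (Fin d) where
  Adj i j := i ≠ j ∧ (B i j ≠ 0 ∨ B j i ≠ 0)
  symm := by
    refine ⟨?_⟩
    intro i j h
    exact ⟨h.1.symm, h.2.symm⟩
  loopless := ⟨fun i h => h.1 rfl⟩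

/-- The largest cardinality of a connected component of the support graph of B. -/
noncomputable def lbs {d : ℕ} (B : Matrix (Fin d) (Fin d) ℝ) : ℕ :=
  ⨆ v : Fin d, {w | (suppGraph B).Reachable v w}.ncard

/-! Every B with ‖A − B‖∞ ≤ ε is nonzero wherever |A i j| > ε, so the support graph of A^ε is a
subgraph of that of B; connected components only grow under adding edges. -/

lemma abs_apply_le_infNorm {d : ℕ} (M : Matrix (Fin d) (Fin d) ℝ) (i j : Fin d) :
    |M i j| ≤ infNorm M :=
  le_ciSup (f := fun p : Fin d × Fin d => |M p.1 p.2|) (Set.finite_range _).bddAbove (i, j)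

lemma infNorm_sub_thresh_le {d : ℕ} (A : Matrix (Fin d) (Fin d) ℝ) {ε : ℝ} (hε : 0 ≤ ε) :
    infNorm (A - thresh A ε) ≤ ε := by
  refine Real.iSup_le (fun p => ?_) hε
  simp only [Matrix.sub_apply, thresh, of_apply]
  split_ifs with h
  · simpa using hε
  · simpa using not_lt.mp h

lemma apply_ne_zero_of_thresh_apply_ne_zero {d : ℕ} {A B : Matrix (Fin d) (Fin d) ℝ} {ε : ℝ}
    (hB : infNorm (A - B) ≤ ε) {i j : Fin d} (h : thresh A ε i j ≠ 0) : B i j ≠ 0 := by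
  intro hBij
  have hbig : ε < |A i j| := by
    by_contra hle
    simp [thresh, hle] at h
  have hsmall : |A i j| ≤ ε := by
    simpa [hBij] using (abs_apply_le_infNorm (A - B) i j).trans hB
  exact hsmall.not_gt hbig

lemma suppGraph_mono {d : ℕ} {B C : Matrix (Fin d) (Fin d) ℝ}
    (h : ∀ i j, B i j ≠ 0 → C i j ≠ 0) : suppGraph B ≤ suppGraph C :=
  fun i j ⟨hne, hij⟩ => ⟨hne, hij.imp (h i j) (h j i)⟩

lemma lbs_le_lbs_of_suppGraph_le {d : ℕ} {B C : Matrix (Fin d) (Fin d) ℝ}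
    (h : suppGraph B ≤ suppGraph C) : lbs B ≤ lbs C :=
  ciSup_le' fun v => le_ciSup_of_le (Set.finite_range _).bddAbove v <|
    Set.ncard_le_ncard (fun _ hw => hw.mono h) (Set.toFinite _)

lemma lbs_thresh_le {d : ℕ} {A B : Matrix (Fin d) (Fin d) ℝ} {ε : ℝ}
    (hB : infNorm (A - B) ≤ ε) : lbs (thresh A ε) ≤ lbs B :=
  lbs_le_lbs_of_suppGraph_le <| suppGraph_mono fun _ _ =>
    apply_ne_zero_of_thresh_apply_ne_zero hB

theorem stmt_6_general {d : ℕ} (A : Matrix (Fin d) (Fin d) ℝ) (ε : ℝ) (hε : 0 < ε) :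
    infNorm (A - thresh A ε) ≤ ε ∧
    (∀ B : Matrix (Fin d) (Fin d) ℝ, infNorm (A - B) ≤ ε → lbs (thresh A ε) ≤ lbs B) ∧
    lbs (thresh A ε) = sInf (lbs '' {B : Matrix (Fin d) (Fin d) ℝ | infNorm (A - B) ≤ ε}) := by
  have happrox := infNorm_sub_thresh_le A hε.le
  have hmin : ∀ B : Matrix (Fin d) (Fin d) ℝ, infNorm (A - B) ≤ ε → lbs (thresh A ε) ≤ lbs B :=
    fun _ => lbs_thresh_le
  have hleast : IsLeast (lbs '' {B : Matrix (Fin d) (Fin d) ℝ | infNorm (A - B) ≤ ε})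
      (lbs (thresh A ε)) := by
    refine ⟨⟨thresh A ε, happrox, rfl⟩, ?_⟩
    rintro _ ⟨B, hB, rfl⟩
    exact hmin B hB
  exact ⟨happrox, hmin, hleast.csInf_eq.symm⟩

/-- The thresholded matrix A^ε is an ε-approximation of A whose largest block size is minimal
among all ε-approximations of A: it attains the ε-intrinsic dimension of A. -/
theorem stmt_6 {d : ℕ} (A : Matrix (Fin d) (Fin d) ℝ) (hA : A.IsSymm) (ε : ℝ) (hε : 0 < ε) :
    infNorm (A - thresh A ε) ≤ ε ∧
    (∀ B : Matrix (Fin d) (Fin d) ℝ, infNorm (A - B) ≤ ε → lbs (thresh A ε) ≤ lbs B) ∧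
    lbs (thresh A ε) = sInf (lbs '' {B : Matrix (Fin d) (Fin d) ℝ | infNorm (A - B) ≤ ε}) :=
  stmt_6_general A ε hε
end

section
/- Let D ≥ 1 and p ≥ 1 be integers, let d₁,…,d_p be integers with 1 ≤ d_i ≤ D for every i, and set d := Σ_{i=1}^p d_i. Let g : ℝ → ℝ be convex and nondecreasing on the interval [1, ∞) with g(1) = 1. Then Σ_{i=1}^p g(d_i) ≤ ⌈d/D⌉ · g(D) + d. -/
/-!
Convexity puts each `g x` with `1 ≤ x ≤ D` below the chord through `(1, g 1)` and `(D, g D)`,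
and that chord value is at most `x + (x / D) * g D`. Summing over the parts gives
`∑ g (dᵢ) ≤ d + (d / D) * g D ≤ d + ⌈d / D⌉ * g D`.
-/

open Finset Set

theorem ConvexOn.sub_mul_le_secant {s : Set ℝ} {f : ℝ → ℝ} (hf : ConvexOn ℝ s f) {a b x : ℝ}
    (ha : a ∈ s) (hb : b ∈ s) (hx : x ∈ Icc a b) :
    (b - a) * f x ≤ (b - x) * f a + (x - a) * f b := by
  obtain ⟨hax, hxb⟩ := hx
  rcases hax.eq_or_lt with rfl | hax
  · linarith
  rcases hxb.eq_or_lt with rfl | hxb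
  · linarith
  exact hf.secant_mono_aux1 ha hb hax hxb

theorem ConvexOn.le_self_add_div_mul {f : ℝ → ℝ} (hf : ConvexOn ℝ (Ici 1) f) (hf1 : f 1 ≤ 1)
    {x D : ℝ} (hfD : 0 ≤ f D) (h1x : 1 ≤ x) (hxD : x ≤ D) :
    f x ≤ x + x / D * f D := by
  rcases (h1x.trans hxD).eq_or_lt with rfl | hD
  · obtain rfl : x = 1 := le_antisymm hxD h1x
    linarith
  have hchord := hf.sub_mul_le_secant (mem_Ici.2 le_rfl) (mem_Ici.2 hD.le) ⟨h1x, hxD⟩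
  have hweight : x - 1 ≤ (D - 1) * (x / D) := by
    rw [mul_div_assoc', le_div_iff₀ (by linarith)]
    nlinarith
  refine le_of_mul_le_mul_left ?_ (sub_pos.2 hD)
  nlinarith [mul_le_mul_of_nonneg_right hweight hfD,
    mul_le_mul_of_nonneg_left hf1 (sub_nonneg.2 hxD)]

theorem stmt_9_general {D p : ℕ} (hD : 1 ≤ D)
    (dd : Fin p → ℕ) (hdd : ∀ i, 1 ≤ dd i ∧ dd i ≤ D)
    (d : ℕ) (hd : d = ∑ i, dd i)
    (g : ℝ → ℝ) (hconv : ConvexOn ℝ (Set.Ici (1 : ℝ)) g)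
    (hmono : MonotoneOn g (Set.Ici (1 : ℝ))) (hg1 : g 1 = 1) :
    ∑ i, g (dd i) ≤ (⌈(d : ℝ) / (D : ℝ)⌉ : ℝ) * g D + (d : ℝ) := by
  have hgD : 0 ≤ g D := by
    have := hmono (mem_Ici.2 le_rfl) (mem_Ici.2 (Nat.one_le_cast.2 hD)) (Nat.one_le_cast.2 hD)
    linarith
  calc ∑ i, g (dd i) ≤ ∑ i, ((dd i : ℝ) + dd i / D * g D) :=
        sum_le_sum fun i _ => hconv.le_self_add_div_mul hg1.le hgD
          (by exact_mod_cast (hdd i).1) (by exact_mod_cast (hdd i).2)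
    _ = d + d / D * g D := by
        rw [sum_add_distrib, ← sum_mul, ← sum_div, hd]
        push_cast
        rfl
    _ ≤ d + ⌈(d : ℝ) / D⌉ * g D := by gcongr; exact Int.le_ceil _
    _ = ⌈(d : ℝ) / D⌉ * g D + d := add_comm _ _

/-- The combinatorial core of the runtime bound: if each dᵢ satisfies 1 ≤ dᵢ ≤ D,
d = Σ dᵢ, and g is convex and nondecreasing on [1, ∞) with g(1) = 1, then
Σ g(dᵢ) ≤ ⌈d/D⌉ · g(D) + d. -/
theorem stmt_9 {D p : ℕ} (hD : 1 ≤ D) (hp : 1 ≤ p)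
    (dd : Fin p → ℕ) (hdd : ∀ i, 1 ≤ dd i ∧ dd i ≤ D)
    (d : ℕ) (hd : d = ∑ i, dd i)
    (g : ℝ → ℝ) (hconv : ConvexOn ℝ (Set.Ici (1 : ℝ)) g)
    (hmono : MonotoneOn g (Set.Ici (1 : ℝ))) (hg1 : g 1 = 1) :
    ∑ i, g (dd i) ≤ (⌈(d : ℝ) / (D : ℝ)⌉ : ℝ) * g D + (d : ℝ) :=
  stmt_9_general hD dd hdd d hd g hconv hmono hg1
end

section
/- Let g : ℝ → ℝ be convex and nondecreasing on [0, ∞) with g(0) = 0, and let a, b, d be real numbers with 0 < a ≤ b ≤ d. Then ⌈d/a⌉ · g(a) ≤ 2 · ⌈d/b⌉ · g(b). -/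
/-! A convex function vanishing at the origin has nondecreasing slope `g x / x`, so
`g a / a ≤ g b / b`. Since `d / a ≥ 1`, rounding up at most doubles it: `⌈d/a⌉ ≤ 2 d / a`. Hence
`⌈d/a⌉ g(a) ≤ 2 d · g(a)/a ≤ 2 d · g(b)/b ≤ 2 ⌈d/b⌉ g(b)`, monotonicity supplying `g ≥ 0`. -/

open Set

theorem ConvexOn.div_le_div_of_map_zero {𝕜 : Type*} [Field 𝕜] [LinearOrder 𝕜]
    [IsStrictOrderedRing 𝕜] {f : 𝕜 → 𝕜} (hf : ConvexOn 𝕜 (Ici 0) f) (hf0 : f 0 = 0)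
    {a b : 𝕜} (ha : 0 < a) (hab : a ≤ b) : f a / a ≤ f b / b := by
  simpa [hf0] using
    hf.secant_mono self_mem_Ici ha.le (ha.trans_le hab).le ha.ne' (ha.trans_le hab).ne' hab

/-- Key inequality in the runtime analysis of the binary-search algorithm: the cost bound
⌈d/δ⌉·g(δ) is, up to a factor 2, monotone in δ. -/
theorem stmt_10 (g : ℝ → ℝ) (hconv : ConvexOn ℝ (Set.Ici (0 : ℝ)) g)
    (hmono : MonotoneOn g (Set.Ici (0 : ℝ))) (hg0 : g 0 = 0)
    (a b d : ℝ) (ha : 0 < a) (hab : a ≤ b) (hbd : b ≤ d) :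
    (⌈d / a⌉ : ℝ) * g a ≤ 2 * ((⌈d / b⌉ : ℝ) * g b) := by
  have hb : 0 < b := ha.trans_le hab
  have hga : 0 ≤ g a := hg0 ▸ hmono self_mem_Ici ha.le ha.le
  have hgb : 0 ≤ g b := hg0 ▸ hmono self_mem_Ici hb.le hb.le
  have hda : 2⁻¹ ≤ d / a := by
    rw [le_div_iff₀ ha]
    linarith
  calc (⌈d / a⌉ : ℝ) * g a ≤ 2 * (d / a) * g a := by
        gcongr
        exact Int.ceil_le_two_mul hda
    _ = 2 * d * (g a / a) := by ring
    _ ≤ 2 * d * (g b / b) :=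
        mul_le_mul_of_nonneg_left (hconv.div_le_div_of_map_zero hg0 ha hab) (by linarith)
    _ = 2 * (d / b * g b) := by ring
    _ ≤ 2 * ((⌈d / b⌉ : ℝ) * g b) := by
        gcongr
        exact Int.le_ceil _
end
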